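/- Let k be a field of characteristic 2 and γ ∈ k. Let R = k[x,y,z]/(xy, x² - yz, z² - γxz). Then m^i = (y^i) for all i ≥ 3. -/
import Mathlib

set_option synthInstance.maxHeartbeats 400000
set_option maxHeartbeats 800000

open MvPolynomial Pointwise

noncomputable def stmt8Ideal {k : Type*} [Field k] (γ : k) : Ideal (MvPolynomial (Fin 3) k) :=
  Ideal.span {X 0 * X 1, X 0 ^ 2 - X 1 * X 2, X 2 ^ 2 - C γ * (X 0 * X 2)}

private theorem stmt8_cube_mem {A : Type*} [CommRing A] (x y z g : A)
    (e1 : x * y = 0) (e2 : x ^ 2 - y * z = 0) (e3 : z ^ 2 - g * (x * z) = 0) :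
    ∀ a ∈ ({x, y, z} : Set A), ∀ b ∈ ({x, y, z} : Set A), ∀ c ∈ ({x, y, z} : Set A),
      a * b * c ∈ Ideal.span {y ^ 3} := by
  intro a ha b hb c hc
  simp only [Set.mem_insert_iff, Set.mem_singleton_iff] at ha hb hc
  rcases ha with ea | ea | ea <;> rcases hb with eb | eb | eb <;>
    rcases hc with ec | ec | ec <;> rw [ea, eb, ec] <;>
  first
    | (refine Ideal.mem_span_singleton.2 ⟨1, ?_⟩; ring1)
    | (refine Ideal.mem_span_singleton.2 ⟨0, ?_⟩; linear_combination x*e2 + z*e1)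
    | (refine Ideal.mem_span_singleton.2 ⟨0, ?_⟩; linear_combination x*e1)
    | (refine Ideal.mem_span_singleton.2 ⟨0, ?_⟩; linear_combination z*e2 + y*e3 + g*z*e1)
    | (refine Ideal.mem_span_singleton.2 ⟨0, ?_⟩; linear_combination y*e1)
    | (refine Ideal.mem_span_singleton.2 ⟨0, ?_⟩; linear_combination z*e1)
    | (refine Ideal.mem_span_singleton.2 ⟨0, ?_⟩;
        linear_combination x*e3 + g*z*e2 + g*y*e3 + g^2*z*e1)
    | (refine Ideal.mem_span_singleton.2 ⟨0, ?_⟩; linear_combination x*e1 - y*e2)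
    | (refine Ideal.mem_span_singleton.2 ⟨0, ?_⟩; linear_combination y*e3 + g*z*e1)
    | (refine Ideal.mem_span_singleton.2 ⟨0, ?_⟩;
        linear_combination z*e3 + g*x*e3 + g^2*z*e2 + g^2*y*e3 + g^3*z*e1)

private theorem stmt8_main {A : Type*} [CommRing A] (x y z g : A)
    (e1 : x * y = 0) (e2 : x ^ 2 - y * z = 0) (e3 : z ^ 2 - g * (x * z) = 0) :
    ∀ n : ℕ, (Ideal.span ({x, y, z} : Set A)) ^ (n + 3) = Ideal.span {y ^ (n + 3)} := by
  intro n
  induction n with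
  | zero =>
    apply le_antisymm
    · have h3 : (Ideal.span ({x, y, z} : Set A)) ^ (0 + 3) =
          Ideal.span (({x, y, z} : Set A) * ({x, y, z} : Set A) * ({x, y, z} : Set A)) := by
        rw [← Ideal.span_mul_span', ← Ideal.span_mul_span']
        ring
      rw [h3, Ideal.span_le]
      rintro p ⟨u, hu, v, hv, rfl⟩
      obtain ⟨a, ha, b, hb, rfl⟩ := hu
      have : a * b * v ∈ Ideal.span {y ^ 3} := stmt8_cube_mem x y z g e1 e2 e3 a ha b hb v hv
      simpa using this
    · rw [Ideal.span_le, Set.singleton_subset_iff]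
      exact Ideal.pow_mem_pow (Ideal.subset_span (by simp [Set.mem_insert_iff])) (0 + 3)
  | succ n ih =>
    have hp : (Ideal.span ({x, y, z} : Set A)) ^ (n + 1 + 3) =
        (Ideal.span ({x, y, z} : Set A)) ^ (n + 3) * Ideal.span ({x, y, z} : Set A) := by
      ring
    rw [hp, ih]
    apply le_antisymm
    · rw [Ideal.span_mul_span', Ideal.span_le]
      rintro p ⟨u, hu, v, hv, rfl⟩
      simp only [Set.mem_singleton_iff] at hu
      simp only [Set.mem_insert_iff, Set.mem_singleton_iff] at hv
      rw [hu]
      rcases hv with h | h | h <;> rw [h]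
      · exact Ideal.mem_span_singleton.2 ⟨0, by linear_combination y^(n+2)*e1⟩
      · exact Ideal.mem_span_singleton.2 ⟨1, by ring⟩
      · exact Ideal.mem_span_singleton.2 ⟨0, by linear_combination y^(n+1)*(x*e1 - y*e2)⟩
    · rw [Ideal.span_le, Set.singleton_subset_iff]
      have hy : y ^ (n + 1 + 3) = y ^ (n + 3) * y := by ring
      rw [hy]
      exact Ideal.mul_mem_mul (Ideal.subset_span rfl)
        (Ideal.subset_span (by simp [Set.mem_insert_iff]))

/-- Let `k` be a field of characteristic `2`, `γ ∈ k`, and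
`R = k[x,y,z]/(xy, x² - yz, z² - γxz)`.  Then `m^i = (y^i)` for all `i ≥ 3`. -/
theorem stmt_8 {k : Type*} [Field k] [CharP k 2] (γ : k) :
    ∀ i : ℕ, 3 ≤ i →
      (Ideal.span {Ideal.Quotient.mk (stmt8Ideal γ) (X 0),
          Ideal.Quotient.mk (stmt8Ideal γ) (X 1),
          Ideal.Quotient.mk (stmt8Ideal γ) (X 2)}) ^ i =
        Ideal.span {(Ideal.Quotient.mk (stmt8Ideal γ) (X 1)) ^ i} := by
  intro i hi
  set q := Ideal.Quotient.mk (stmt8Ideal γ) with hq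
  have e1 : q (X 0) * q (X 1) = 0 := by
    rw [hq, ← map_mul, Ideal.Quotient.eq_zero_iff_mem]
    exact Ideal.subset_span (by simp [Set.mem_insert_iff])
  have e2 : q (X 0) ^ 2 - q (X 1) * q (X 2) = 0 := by
    rw [hq, ← map_pow, ← map_mul, ← map_sub, Ideal.Quotient.eq_zero_iff_mem]
    exact Ideal.subset_span (by simp [Set.mem_insert_iff])
  have e3 : q (X 2) ^ 2 - q (C γ) * (q (X 0) * q (X 2)) = 0 := by
    rw [hq, ← map_pow, ← map_mul, ← map_mul, ← map_sub, Ideal.Quotient.eq_zero_iff_mem]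
    exact Ideal.subset_span (by simp [Set.mem_insert_iff])
  obtain ⟨n, rfl⟩ : ∃ n, i = n + 3 := ⟨i - 3, by omega⟩
  exact stmt8_main (q (X 0)) (q (X 1)) (q (X 2)) (q (C γ)) e1 e2 e3 n
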